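/- arXiv:0811.3370 — 6 statements merged into one kernel-verified Lean document; each statement's English description precedes it below -/
import Mathlib

section
/- Let f and g be orientation-reversing C^∞ diffeomorphisms of ℝ fixing 0. The following are equivalent: (1) there exists h ∈ Diffeo⁺ with f = h⁻¹ ∘ g ∘ h; (2)(a) there exists h₁ ∈ Diffeo⁺ fixing 0 such that f∘f = h₁⁻¹ ∘ (g∘g) ∘ h₁, and (b) setting g₁ = h₁⁻¹ ∘ g ∘ h₁, there exists h₂ ∈ Diffeo⁺ fixing 0 and commuting with f∘f such that T_0 f = (T_0 g₁)^(T_0 h₂), i.e. the maps h₂∘f and g₁∘h₂ have equal n-th derivatives at 0 for every n ≥ 1. -/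
/-
If `h` conjugates `f` to `g`, then `h 0` is a fixed point of `g`, hence `h 0 = 0`; `h` also
conjugates `f ∘ f` to `g ∘ g`, and `h₂ = id` works.

Conversely, replacing `g` by `g₁ = h₁⁻¹ ∘ g ∘ h₁` we may assume `f ∘ f = g ∘ g`. Since `f` and `g`
swap the two half-lines, a conjugacy `H` with `H ∘ f = g ∘ H` is determined by its restriction
to `[0, ∞)`: take `H = h₂` there and `H = g⁻¹ ∘ h₂ ∘ f` on `(-∞, 0]`. The conjugacy equation
then holds on both half-lines because `h₂` commutes with `f ∘ f = g ∘ g`, and the two pieces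
glue to a C^∞ map because `h₂ ∘ f` and `g ∘ h₂` have the same Taylor series at `0`.
-/

/-- `f` is a C^∞ diffeomorphism of ℝ: a bijection such that both `f` and its
inverse are infinitely differentiable. -/
def IsDiffeo (f : ℝ → ℝ) : Prop :=
  Function.Bijective f ∧ ContDiff ℝ (⊤ : ℕ∞) f ∧ ContDiff ℝ (⊤ : ℕ∞) (Function.invFun f)

open Function Set
open scoped ContDiff

section InvFun

variable {α β γ : Type*} [Nonempty α]

lemma Function.Bijective.invFun_invFun [Nonempty β] {f : α → β} (hf : Bijective f) :
    invFun (invFun f) = f :=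
  invFun_eq_of_injective_of_rightInverse (rightInverse_invFun hf.2).injective
    (leftInverse_invFun hf.1)

lemma Function.Bijective.invFun_comp [Nonempty β] {f : α → β} {g : β → γ} (hg : Bijective g)
    (hf : Bijective f) : invFun (g ∘ f) = invFun f ∘ invFun g :=
  invFun_eq_of_injective_of_rightInverse (hg.1.comp hf.1) fun c => by
    simp only [comp_apply, rightInverse_invFun hf.2 _, rightInverse_invFun hg.2 c]

lemma Function.Bijective.semiconj_iff {h : α → β} (hh : Bijective h) {f : α → α} {g : β → β} :
    Semiconj h f g ↔ f = invFun h ∘ g ∘ h := by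
  constructor
  · intro hs
    funext x
    rw [comp_apply, comp_apply, ← hs.eq, leftInverse_invFun hh.1]
  · rintro rfl x
    exact rightInverse_invFun hh.2 _

lemma Function.Surjective.semiconj_invFun_comp_comp {h : α → β} (hh : Surjective h) (g : β → β) :
    Semiconj h (invFun h ∘ g ∘ h) g :=
  fun _ => rightInverse_invFun hh _

lemma StrictMono.invFun [LinearOrder α] [Preorder β] {f : α → β} (hf : StrictMono f)
    (hs : Surjective f) : StrictMono (invFun f) := fun a b hab => by
  rw [← rightInverse_invFun hs a, ← rightInverse_invFun hs b] at hab
  exact hf.lt_iff_lt.1 hab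

lemma StrictAnti.invFun [LinearOrder α] [Preorder β] {f : α → β} (hf : StrictAnti f)
    (hs : Surjective f) : StrictAnti (invFun f) := fun a b hab => by
  rw [← rightInverse_invFun hs a, ← rightInverse_invFun hs b] at hab
  exact hf.lt_iff_gt.1 hab

lemma Function.Injective.invFun_eq_of_apply_eq {f : α → β} (hf : Injective f) {a : α} {b : β}
    (h : f a = b) : invFun f b = a :=
  h ▸ leftInverse_invFun hf a

end InvFun

lemma StrictAnti.isFixedPt_unique {α : Type*} [LinearOrder α] {g : α → α} (hg : StrictAnti g)
    {a b : α} (ha : IsFixedPt g a) (hb : IsFixedPt g b) : a = b := by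
  rcases lt_trichotomy a b with hab | hab | hab
  · exact absurd (hb.eq ▸ ha.eq ▸ hg hab) hab.not_gt
  · exact hab
  · exact absurd (ha.eq ▸ hb.eq ▸ hg hab) hab.not_gt

section Deriv

variable {𝕜 F : Type*} [NontriviallyNormedField 𝕜] [NormedAddCommGroup F] [NormedSpace 𝕜 F]

lemma DifferentiableAt.deriv_eq_of_eqOn {u v : 𝕜 → F} {s : Set 𝕜} {x : 𝕜}
    (hu : DifferentiableAt 𝕜 u x) (hv : DifferentiableAt 𝕜 v x) (hs : UniqueDiffWithinAt 𝕜 s x)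
    (hx : x ∈ s) (h : EqOn u v s) : deriv u x = deriv v x := by
  rw [← hu.derivWithin hs, ← hv.derivWithin hs, derivWithin_congr h (h hx)]

end Deriv

namespace IsDiffeo

variable {f g : ℝ → ℝ}

lemma differentiable (hf : IsDiffeo f) : Differentiable ℝ f :=
  hf.2.1.differentiable (by simp)

lemma invFun (hf : IsDiffeo f) : IsDiffeo (Function.invFun f) := by
  refine ⟨⟨(rightInverse_invFun hf.1.2).injective, invFun_surjective hf.1.1⟩, hf.2.2, ?_⟩
  rw [hf.1.invFun_invFun]
  exact hf.2.1

lemma comp (hg : IsDiffeo g) (hf : IsDiffeo f) : IsDiffeo (g ∘ f) :=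
  ⟨hg.1.comp hf.1, hg.2.1.comp hf.2.1, hg.1.invFun_comp hf.1 ▸ hf.2.2.comp hg.2.2⟩

lemma deriv_ne_zero (hf : IsDiffeo f) (x : ℝ) : deriv f x ≠ 0 := by
  have hchain :
      HasDerivAt (Function.invFun f ∘ f) (deriv (Function.invFun f) (f x) * deriv f x) x :=
    (hf.invFun.differentiable (f x)).hasDerivAt.comp x (hf.differentiable x).hasDerivAt
  rw [Function.invFun_comp hf.1.1] at hchain
  exact right_ne_zero_of_mul (hchain.unique (hasDerivAt_id x) ▸ one_ne_zero)

end IsDiffeo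

lemma isDiffeo_id : IsDiffeo id := by
  refine ⟨bijective_id, contDiff_id, ?_⟩
  rw [show invFun (id : ℝ → ℝ) = id from invFun_comp injective_id]
  exact contDiff_id

lemma isDiffeo_of_strictMono {f : ℝ → ℝ} (hm : StrictMono f) (hs : Surjective f)
    (hc : ContDiff ℝ ∞ f) (hd : ∀ x, deriv f x ≠ 0) : IsDiffeo f := by
  let e := (hm.orderIsoOfSurjective f hs).toHomeomorph
  have he : invFun f = e.symm :=
    invFun_eq_of_injective_of_rightInverse hm.injective
      (hm.orderIsoOfSurjective_self_symm_apply f hs)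
  refine ⟨⟨hm.injective, hs⟩, hc, he ▸ ?_⟩
  exact e.contDiff_symm_deriv hd (fun x => (hc.differentiable (by simp) x).hasDerivAt) hc

section Gluing

variable {F : Type*} [NormedAddCommGroup F] [NormedSpace ℝ F] {u v : ℝ → F} {a : ℝ}

lemma hasDerivAt_ite_le (hu : Differentiable ℝ u) (hv : Differentiable ℝ v) (h₀ : u a = v a)
    (h₁ : deriv u a = deriv v a) (x : ℝ) :
    HasDerivAt (fun y => if y ≤ a then u y else v y)
      (if x ≤ a then deriv u x else deriv v x) x := by
  rcases lt_trichotomy x a with hx | rfl | hx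
  · rw [if_pos hx.le]
    exact (hu x).hasDerivAt.congr_of_eventuallyEq
      ((eventually_lt_nhds hx).mono fun y hy => if_pos hy.le)
  · have hleft : HasDerivWithinAt (fun y => if y ≤ x then u y else v y) (deriv u x) (Iic x) x :=
      (hu x).hasDerivAt.hasDerivWithinAt.congr (fun y hy => if_pos hy) (if_pos le_rfl)
    have hright : HasDerivWithinAt (fun y => if y ≤ x then u y else v y) (deriv u x) (Ici x) x := by
      have heq : EqOn (fun y => if y ≤ x then u y else v y) v (Ici x) := fun y hy => by
        rcases (mem_Ici.1 hy).eq_or_lt with rfl | hlt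
        · simp [h₀]
        · simp [hlt.not_ge]
      exact h₁ ▸ (hv x).hasDerivAt.hasDerivWithinAt.congr heq (heq self_mem_Ici)
    rw [if_pos le_rfl, ← hasDerivWithinAt_univ, ← Iic_union_Ici]
    exact hleft.union hright
  · rw [if_neg hx.not_ge]
    exact (hv x).hasDerivAt.congr_of_eventuallyEq
      ((eventually_gt_nhds hx).mono fun y hy => if_neg hy.not_ge)

lemma contDiff_ite_le_of_iteratedDeriv_eq {n : ℕ} (hu : ContDiff ℝ n u) (hv : ContDiff ℝ n v)
    (h : ∀ m ≤ n, iteratedDeriv m u a = iteratedDeriv m v a) :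
    ContDiff ℝ n (fun x => if x ≤ a then u x else v x) := by
  induction n generalizing u v with
  | zero =>
    rw [Nat.cast_zero, contDiff_zero] at *
    refine hu.if_le hv continuous_id continuous_const fun x hx => ?_
    simpa [hx] using h 0 le_rfl
  | succ n ih =>
    rw [Nat.cast_succ, contDiff_succ_iff_deriv] at *
    have hderiv := hasDerivAt_ite_le (a := a) hu.1 hv.1 (by simpa using h 0 (by omega))
      (by simpa using h 1 (by omega))
    refine ⟨fun x => (hderiv x).differentiableAt, by simp, ?_⟩
    rw [funext fun x => (hderiv x).deriv]
    refine ih hu.2.2 hv.2.2 fun m hm => ?_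
    simpa only [iteratedDeriv_succ'] using h (m + 1) (by omega)

lemma contDiff_infty_ite_le_of_iteratedDeriv_eq (hu : ContDiff ℝ ∞ u) (hv : ContDiff ℝ ∞ v)
    (h : ∀ m, iteratedDeriv m u a = iteratedDeriv m v a) :
    ContDiff ℝ ∞ (fun x => if x ≤ a then u x else v x) :=
  contDiff_infty.2 fun _ => contDiff_ite_le_of_iteratedDeriv_eq (hu.of_le (mod_cast le_top))
    (hv.of_le (mod_cast le_top)) fun m _ => h m

end Gluing

noncomputable def conjGlue (f g h : ℝ → ℝ) (x : ℝ) : ℝ :=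
  if x ≤ 0 then invFun g (h (f x)) else h x

section ConjGlue

variable {f g h : ℝ → ℝ} {x : ℝ}

lemma conjGlue_of_nonpos (hx : x ≤ 0) : conjGlue f g h x = invFun g (h (f x)) := if_pos hx

lemma conjGlue_of_nonneg (hg : Injective g) (hf0 : f 0 = 0) (hg0 : g 0 = 0) (hh0 : h 0 = 0)
    (hx : 0 ≤ x) : conjGlue f g h x = h x := by
  rcases hx.eq_or_lt with rfl | hpos
  · rw [conjGlue_of_nonpos le_rfl, hf0, hh0, hg.invFun_eq_of_apply_eq hg0]
  · exact if_neg hpos.not_ge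

lemma contDiff_conjGlue (hf : IsDiffeo f) (hg : IsDiffeo g) (hh : IsDiffeo h)
    (htaylor : ∀ n, iteratedDeriv n (h ∘ f) 0 = iteratedDeriv n (g ∘ h) 0) :
    ContDiff ℝ ∞ (conjGlue f g h) := by
  have hglue : conjGlue f g h = invFun g ∘ fun x => if x ≤ 0 then (h ∘ f) x else (g ∘ h) x := by
    funext x
    by_cases hx : x ≤ 0
    · simp [conjGlue, hx]
    · simp [conjGlue, hx, leftInverse_invFun hg.1.1 _]
  rw [hglue]
  exact hg.2.2.comp (contDiff_infty_ite_le_of_iteratedDeriv_eq (hh.2.1.comp hf.2.1)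
    (hg.2.1.comp hh.2.1) htaylor)

lemma strictMono_conjGlue (hg : Bijective g) (hfa : StrictAnti f) (hga : StrictAnti g)
    (hhm : StrictMono h) (hf0 : f 0 = 0) (hg0 : g 0 = 0) (hh0 : h 0 = 0) :
    StrictMono (conjGlue f g h) := by
  refine StrictMonoOn.Iic_union_Ici (a := 0) ?_ ?_
  · exact (((hga.invFun hg.2).comp_strictMono hhm).comp hfa).strictMonoOn _ |>.congr
      fun x hx => (conjGlue_of_nonpos hx).symm
  · exact hhm.strictMonoOn _ |>.congr fun x hx => (conjGlue_of_nonneg hg.1 hf0 hg0 hh0 hx).symm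

lemma surjective_conjGlue (hf : Surjective f) (hg : Injective g) (hh : Surjective h)
    (hfa : StrictAnti f) (hga : StrictAnti g) (hhm : StrictMono h) (hf0 : f 0 = 0) (hg0 : g 0 = 0)
    (hh0 : h 0 = 0) : Surjective (conjGlue f g h) := by
  intro z
  rcases le_total 0 z with hz | hz
  · obtain ⟨y, rfl⟩ := hh z
    have hy : 0 ≤ y := hhm.le_iff_le.1 (by rwa [hh0])
    exact ⟨y, conjGlue_of_nonneg hg hf0 hg0 hh0 hy⟩
  · obtain ⟨y, hy⟩ := hh (g z)
    obtain ⟨x, rfl⟩ := hf y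
    have hgz : 0 ≤ g z := by simpa [hg0] using hga.antitone hz
    have hfx : 0 ≤ f x := hhm.le_iff_le.1 (by rwa [hh0, hy])
    have hx : x ≤ 0 := hfa.le_iff_ge.1 (by rwa [hf0])
    exact ⟨x, by rw [conjGlue_of_nonpos hx, hy, leftInverse_invFun hg z]⟩

lemma deriv_conjGlue_ne_zero (hf : IsDiffeo f) (hg : IsDiffeo g) (hh : IsDiffeo h)
    (hd : Differentiable ℝ (conjGlue f g h)) (hf0 : f 0 = 0) (hg0 : g 0 = 0) (hh0 : h 0 = 0)
    (x : ℝ) : deriv (conjGlue f g h) x ≠ 0 := by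
  rcases le_total x 0 with hx | hx
  · have hcomp := hg.invFun.comp (hh.comp hf)
    rw [(hd x).deriv_eq_of_eqOn (hcomp.differentiable x) (uniqueDiffWithinAt_Iic x) self_mem_Iic
      fun y hy => conjGlue_of_nonpos ((mem_Iic.1 hy).trans hx)]
    exact hcomp.deriv_ne_zero x
  · rw [(hd x).deriv_eq_of_eqOn (hh.differentiable x) (uniqueDiffWithinAt_Ici x) self_mem_Ici
      fun y hy => conjGlue_of_nonneg hg.1.1 hf0 hg0 hh0 (hx.trans hy)]
    exact hh.deriv_ne_zero x

lemma semiconj_conjGlue (hg : Bijective g) (hfa : StrictAnti f) (hf0 : f 0 = 0) (hg0 : g 0 = 0)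
    (hh0 : h 0 = 0) (hsq : f ∘ f = g ∘ g) (hcomm : Function.Commute h (f ∘ f)) :
    Semiconj (conjGlue f g h) f g := by
  intro x
  rcases le_total x 0 with hx | hx
  · have hfx : 0 ≤ f x := hf0 ▸ hfa.antitone hx
    rw [conjGlue_of_nonneg hg.1 hf0 hg0 hh0 hfx, conjGlue_of_nonpos hx, rightInverse_invFun hg.2]
  · have hfx : f x ≤ 0 := hf0 ▸ hfa.antitone hx
    rw [conjGlue_of_nonpos hfx, conjGlue_of_nonneg hg.1 hf0 hg0 hh0 hx, ← comp_apply (f := f),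
      hcomm.eq, hsq, comp_apply, leftInverse_invFun hg.1]

end ConjGlue

theorem exists_isDiffeo_semiconj_of_taylor_eq {f g h : ℝ → ℝ} (hf : IsDiffeo f) (hg : IsDiffeo g)
    (hfa : StrictAnti f) (hga : StrictAnti g) (hf0 : f 0 = 0) (hg0 : g 0 = 0) (hh : IsDiffeo h)
    (hhm : StrictMono h) (hh0 : h 0 = 0) (hsq : f ∘ f = g ∘ g)
    (hcomm : Function.Commute h (f ∘ f))
    (htaylor : ∀ n, 1 ≤ n → iteratedDeriv n (h ∘ f) 0 = iteratedDeriv n (g ∘ h) 0) :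
    ∃ H, IsDiffeo H ∧ StrictMono H ∧ Semiconj H f g := by
  have htaylor₀ : ∀ n, iteratedDeriv n (h ∘ f) 0 = iteratedDeriv n (g ∘ h) 0
    | 0 => by simp [hf0, hg0, hh0]
    | n + 1 => htaylor (n + 1) n.succ_pos
  have hc := contDiff_conjGlue hf hg hh htaylor₀
  have hmono := strictMono_conjGlue hg.1 hfa hga hhm hf0 hg0 hh0
  refine ⟨conjGlue f g h, isDiffeo_of_strictMono hmono ?_ hc ?_, hmono,
    semiconj_conjGlue hg.1 hfa hf0 hg0 hh0 hsq hcomm⟩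
  · exact surjective_conjGlue hf.1.2 hg.1.1 hh.1.2 hfa hga hhm hf0 hg0 hh0
  · exact deriv_conjGlue_ne_zero hf hg hh (hc.differentiable (by simp)) hf0 hg0 hh0

theorem reduction_theorem
    (f g : ℝ → ℝ) (hf : IsDiffeo f) (hg : IsDiffeo g)
    (hfa : StrictAnti f) (hga : StrictAnti g)
    (hf0 : f 0 = 0) (hg0 : g 0 = 0) :
    (∃ h : ℝ → ℝ, IsDiffeo h ∧ StrictMono h ∧ f = Function.invFun h ∘ g ∘ h) ↔
    (∃ h₁ : ℝ → ℝ, IsDiffeo h₁ ∧ StrictMono h₁ ∧ h₁ 0 = 0 ∧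
      f ∘ f = Function.invFun h₁ ∘ (g ∘ g) ∘ h₁ ∧
      ∃ h₂ : ℝ → ℝ, IsDiffeo h₂ ∧ StrictMono h₂ ∧ h₂ 0 = 0 ∧
        h₂ ∘ (f ∘ f) = (f ∘ f) ∘ h₂ ∧
        ∀ n : ℕ, 1 ≤ n →
          iteratedDeriv n (h₂ ∘ f) 0 =
            iteratedDeriv n ((Function.invFun h₁ ∘ g ∘ h₁) ∘ h₂) 0) := by
  constructor
  · rintro ⟨h, hh, hhm, hfe⟩
    have hs : Semiconj h f g := hh.1.semiconj_iff.2 hfe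
    have hfix : g (h 0) = h 0 := by simpa [hf0] using (hs 0).symm
    have hh0 : h 0 = 0 := hga.isFixedPt_unique hfix hg0
    exact ⟨h, hh, hhm, hh0, hh.1.semiconj_iff.1 (hs.comp_right hs), id, isDiffeo_id,
      strictMono_id, rfl, rfl, fun n _ => by rw [← hfe]; rfl⟩
  · rintro ⟨h₁, hh₁, hm₁, h₁0, hsq, h₂, hh₂, hm₂, h₂0, hcomm, htaylor⟩
    set g₁ := invFun h₁ ∘ g ∘ h₁
    have hg₁ : IsDiffeo g₁ := hh₁.invFun.comp (hg.comp hh₁)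
    have hg₁a : StrictAnti g₁ := (hm₁.invFun hh₁.1.2).comp_strictAnti (hga.comp_strictMono hm₁)
    have hg₁0 : g₁ 0 = 0 := by simp [g₁, h₁0, hg0, hh₁.1.1.invFun_eq_of_apply_eq h₁0]
    have hs₁ : Semiconj h₁ g₁ g := hh₁.1.2.semiconj_invFun_comp_comp g
    have hsq₁ : f ∘ f = g₁ ∘ g₁ := hsq.trans (hh₁.1.semiconj_iff.1 (hs₁.comp_right hs₁)).symm
    obtain ⟨H, hH, hHm, hs⟩ := exists_isDiffeo_semiconj_of_taylor_eq hf hg₁ hfa hg₁a hf0 hg₁0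
      hh₂ hm₂ h₂0 hsq₁ (congrFun hcomm) htaylor
    exact ⟨h₁ ∘ H, hh₁.comp hH, hm₁.comp hHm, (hh₁.1.comp hH.1).semiconj_iff.1 (hs₁.comp_left hs)⟩
end

section
/- Let τ be a proper involution in Diffeo, i.e. a C^∞ diffeomorphism of ℝ with τ∘τ = id and τ ≠ id. Then there exists an orientation-preserving C^∞ diffeomorphism ψ of ℝ such that ψ⁻¹ ∘ (−id) ∘ ψ = τ, i.e. τ is conjugated to the map x ↦ −x by an element of Diffeo⁺. -/
open Function Filter

theorem Function.Involutive.eq_id_of_monotone {α : Type*} [LinearOrder α] {f : α → α}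
    (hf : Involutive f) (hmono : Monotone f) : f = id := by
  funext x
  show f x = x
  rcases le_total (f x) x with h | h
  · exact le_antisymm h (by simpa only [hf x] using hmono h)
  · exact le_antisymm (by simpa only [hf x] using hmono h) h

theorem Continuous.strictAnti_of_involutive {α : Type*} [ConditionallyCompleteLinearOrder α]
    [DenselyOrdered α] [TopologicalSpace α] [OrderTopology α] {f : α → α} (hc : Continuous f)
    (hf : Involutive f) (hne : f ≠ id) : StrictAnti f :=
  (hc.strictMono_of_inj hf.injective).resolve_left fun hmono =>
    hne (hf.eq_id_of_monotone hmono.monotone)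

theorem isDiffeo_of_strictMono_s5 {f : ℝ → ℝ} (hmono : StrictMono f) (hsurj : Surjective f)
    (hf : ContDiff ℝ (⊤ : ℕ∞) f) (hf' : ∀ x, deriv f x ≠ 0) : IsDiffeo f := by
  let e : ℝ ≃ₜ ℝ := (hmono.orderIsoOfSurjective f hsurj).toHomeomorph
  have hdiff : ∀ x, HasDerivAt e (deriv f x) x := fun x =>
    (hf.differentiable (by simp) x).hasDerivAt
  have hinv : invFun f = e.symm := funext fun y =>
    hmono.injective <| (rightInverse_invFun hsurj y).trans (e.apply_symm_apply y).symm
  exact ⟨⟨hmono.injective, hsurj⟩, hf, hinv ▸ e.contDiff_symm_deriv hf' hdiff hf⟩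

noncomputable def oddPart (τ : ℝ → ℝ) (x : ℝ) : ℝ := (x - τ x) / 2

section oddPart

variable {τ : ℝ → ℝ}

theorem oddPart_apply_of_involutive (hτ : Involutive τ) (x : ℝ) :
    oddPart τ (τ x) = -oddPart τ x := by
  simp only [oddPart, hτ x]
  ring

theorem Antitone.sub_div_two_le_oddPart_sub (hτ : Antitone τ) {x y : ℝ} (hxy : x ≤ y) :
    (y - x) / 2 ≤ oddPart τ y - oddPart τ x := by
  unfold oddPart
  linarith [hτ hxy]

theorem Antitone.strictMono_oddPart (hτ : Antitone τ) : StrictMono (oddPart τ) :=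
  fun x y hxy => by linarith [hτ.sub_div_two_le_oddPart_sub hxy.le]

theorem Antitone.surjective_oddPart (hτ : Antitone τ) (hc : Continuous τ) :
    Surjective (oddPart τ) := by
  refine Continuous.surjective (by unfold oddPart; fun_prop) ?_ ?_
  · refine tendsto_atTop_mono' _ ((eventually_ge_atTop 0).mono fun x hx => ?_)
      (tendsto_atTop_add_const_left _ (oddPart τ 0) (tendsto_id.atTop_div_const two_pos))
    rw [id_eq]
    linarith [hτ.sub_div_two_le_oddPart_sub hx]
  · refine tendsto_atBot_mono' _ ((eventually_le_atBot 0).mono fun x hx => ?_)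
      (tendsto_atBot_add_const_left _ (oddPart τ 0) (tendsto_id.atBot_div_const two_pos))
    rw [id_eq]
    linarith [hτ.sub_div_two_le_oddPart_sub hx]

theorem ContDiff.oddPart {n : WithTop ℕ∞} (hτ : ContDiff ℝ n τ) : ContDiff ℝ n (oddPart τ) :=
  (contDiff_id.sub hτ).div_const 2

theorem deriv_oddPart (hτ : Differentiable ℝ τ) (x : ℝ) :
    deriv (oddPart τ) x = (1 - deriv τ x) / 2 :=
  (((hasDerivAt_id x).sub (hτ x).hasDerivAt).div_const 2).deriv

end oddPart

theorem proper_involution_conjugate_to_neg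
    (τ : ℝ → ℝ) (hτ : IsDiffeo τ) (hinv : τ ∘ τ = id) (hne : τ ≠ id) :
    ∃ ψ : ℝ → ℝ, IsDiffeo ψ ∧ StrictMono ψ ∧
      Function.invFun ψ ∘ (fun x : ℝ => -x) ∘ ψ = τ := by
  obtain ⟨-, hsmooth, -⟩ := hτ
  have hinvol : Involutive τ := congrFun hinv
  have hanti : Antitone τ := (hsmooth.continuous.strictAnti_of_involutive hinvol hne).antitone
  have hmono : StrictMono (oddPart τ) := hanti.strictMono_oddPart
  have hderiv_pos : ∀ x, 0 < deriv (oddPart τ) x := fun x => by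
    rw [deriv_oddPart (hsmooth.differentiable (by simp))]
    linarith [hanti.deriv_nonpos (x := x)]
  refine ⟨oddPart τ, isDiffeo_of_strictMono_s5 hmono (hanti.surjective_oddPart hsmooth.continuous)
    hsmooth.oddPart fun x => (hderiv_pos x).ne', hmono, funext fun x => ?_⟩
  simp only [comp_apply, ← oddPart_apply_of_involutive hinvol]
  exact leftInverse_invFun hmono.injective (τ x)
end

section
/- Let f and g be orientation-reversing C^∞ diffeomorphisms of ℝ fixing 0 with f∘f = g∘g, and suppose (T_0 f)^∘2 ≠ X, i.e. there exists n ≥ 1 such that the n-th derivative of f∘f at 0 differs from the n-th derivative of the identity at 0. Then T_0 f = T_0 g, i.e. the n-th derivatives of f and g at 0 agree for every n ≥ 1. -/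
open Filter Topology Asymptotics Set
open scoped ContDiff

/-- `h x = c * x ^ n + o(x ^ n)` as `x → 0`; the coefficient `c` may vanish. -/
def HasLeadingTerm (h : ℝ → ℝ) (c : ℝ) (n : ℕ) : Prop :=
  (fun x => h x - c * x ^ n) =o[𝓝 0] fun x => x ^ n

lemma exists_mem_uIcc_sub_eq_deriv_mul {h : ℝ → ℝ} (hh : Differentiable ℝ h) (a b : ℝ) :
    ∃ ξ ∈ uIcc a b, h b - h a = deriv h ξ * (b - a) := by
  wlog hab : a ≤ b generalizing a b
  · obtain ⟨ξ, hξ, hmvt⟩ := this b a (le_of_not_ge hab)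
    exact ⟨ξ, uIcc_comm a b ▸ hξ, by linarith⟩
  rcases hab.eq_or_lt with rfl | hab
  · exact ⟨a, left_mem_uIcc, by simp⟩
  obtain ⟨ξ, hξ, hslope⟩ := exists_deriv_eq_slope h hab hh.continuous.continuousOn
    hh.differentiableOn
  refine ⟨ξ, Icc_subset_uIcc (Ioo_subset_Icc_self hξ), ?_⟩
  rw [hslope, div_mul_cancel₀ _ (sub_ne_zero.mpr hab.ne')]

namespace HasLeadingTerm

variable {h h₁ h₂ u v ξ : ℝ → ℝ} {a b c c₁ c₂ d : ℝ} {k m n : ℕ}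

lemma zero : HasLeadingTerm 0 0 n := by
  simp [HasLeadingTerm]

lemma congr (hh : HasLeadingTerm h c n) (heq : ∀ x, h x = h₁ x) : HasLeadingTerm h₁ c n := by
  simpa only [HasLeadingTerm, heq] using hh

lemma isBigO (hh : HasLeadingTerm h c n) : h =O[𝓝 0] fun x => x ^ n := by
  simpa using (IsLittleO.isBigO hh).add ((isBigO_refl (fun x : ℝ => x ^ n) _).const_mul_left c)

lemma unique (hc₁ : HasLeadingTerm h c₁ n) (hc₂ : HasLeadingTerm h c₂ n) : c₁ = c₂ := by
  by_contra hne
  have hsmall : (fun x : ℝ => (c₂ - c₁) * x ^ n) =o[𝓝 0] fun x => x ^ n :=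
    (IsLittleO.sub hc₁ hc₂).congr_left fun x => by ring
  rw [isLittleO_const_mul_left_iff (sub_ne_zero.mpr (Ne.symm hne))] at hsmall
  refine isLittleO_irrefl (Eventually.frequently ?_)
    (hsmall.mono (nhdsWithin_le_nhds (s := {0}ᶜ)))
  filter_upwards [self_mem_nhdsWithin] with x hx
  exact pow_ne_zero n hx

lemma add (h₁' : HasLeadingTerm h₁ c₁ n) (h₂' : HasLeadingTerm h₂ c₂ n) :
    HasLeadingTerm (fun x => h₁ x + h₂ x) (c₁ + c₂) n :=
  (IsLittleO.add h₁' h₂').congr_left fun x => by ring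

lemma mul (h₁' : HasLeadingTerm h₁ c₁ m) (h₂' : HasLeadingTerm h₂ c₂ n) :
    HasLeadingTerm (fun x => h₁ x * h₂ x) (c₁ * c₂) (m + n) := by
  have t₁ := h₁'.isBigO.mul_isLittleO h₂'
  have t₂ := ((isBigO_refl (fun x : ℝ => x ^ n) (𝓝 0)).const_mul_left c₂).mul_isLittleO h₁'
  refine ((t₁.add (t₂.congr_right fun x => mul_comm _ _)).congr (fun x => by ring)
    fun x => by ring).congr_right fun x => (pow_add x m n).symm

lemma pow (hu : HasLeadingTerm u b 1) : ∀ k : ℕ, HasLeadingTerm (fun x => u x ^ k) (b ^ k) k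
  | 0 => by simp [HasLeadingTerm]
  | k + 1 => by simpa only [pow_succ] using (hu.pow k).mul hu

lemma tendsto (hu : HasLeadingTerm u b 1) : Tendsto u (𝓝 0) (𝓝 0) :=
  hu.isBigO.trans_tendsto ((continuous_pow 1).tendsto' 0 0 (by simp))

lemma comp (hh : HasLeadingTerm h c n) (hu : HasLeadingTerm u b 1) :
    HasLeadingTerm (fun x => h (u x)) (c * b ^ n) n := by
  have hpow : (fun x => u x ^ n) =O[𝓝 0] fun x : ℝ => x ^ n := by
    simpa using hu.isBigO.pow n
  have t₁ : (fun x => h (u x) - c * u x ^ n) =o[𝓝 0] fun x => x ^ n :=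
    (IsLittleO.comp_tendsto hh hu.tendsto).trans_isBigO hpow
  exact (t₁.add (IsLittleO.const_mul_left (hu.pow n) c)).congr_left fun x => by ring

lemma of_mem_uIcc (hu : HasLeadingTerm u c n) (hv : HasLeadingTerm v c n)
    (hξ : ∀ x, ξ x ∈ uIcc (v x) (u x)) : HasLeadingTerm ξ c n := by
  refine IsBigO.trans_isLittleO (IsBigO.of_bound 1 (Eventually.of_forall fun x => ?_))
    ((IsLittleO.norm_left hu).add (IsLittleO.norm_left hv))
  simp only [Real.norm_eq_abs, one_mul]
  refine (abs_le.mpr ⟨?_, ?_⟩).trans (le_abs_self _) <;>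
    rcases mem_uIcc.mp (hξ x) with ⟨h₁, h₂⟩ | ⟨h₁, h₂⟩ <;>
    linarith [le_abs_self (u x - c * x ^ n), neg_abs_le (u x - c * x ^ n),
      le_abs_self (v x - c * x ^ n), neg_abs_le (v x - c * x ^ n)]

lemma comp_sub_comp (hh' : HasLeadingTerm (deriv h) a k) (hh : Differentiable ℝ h)
    (hu : HasLeadingTerm u b 1) (hv : HasLeadingTerm v b 1)
    (huv : HasLeadingTerm (fun x => u x - v x) d m) :
    HasLeadingTerm (fun x => h (u x) - h (v x)) (a * b ^ k * d) (k + m) := by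
  choose ξ hξ hmvt using fun x => exists_mem_uIcc_sub_eq_deriv_mul hh (v x) (u x)
  -- squeezed between `u` and `v`, the mean value point is itself `b x + o(x)`
  exact ((hh'.comp (hu.of_mem_uIcc hv hξ)).mul huv).congr fun x => (hmvt x).symm

end HasLeadingTerm

lemma ContinuousAt.hasLeadingTerm_zero {h : ℝ → ℝ} (hh : ContinuousAt h 0) :
    HasLeadingTerm h (h 0) 0 := by
  simpa [HasLeadingTerm, isLittleO_one_iff, tendsto_sub_nhds_zero_iff] using hh.tendsto

lemma HasDerivAt.hasLeadingTerm_one {h : ℝ → ℝ} {b : ℝ} (hh : HasDerivAt h b 0) (h0 : h 0 = 0) :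
    HasLeadingTerm h b 1 := by
  simpa [HasLeadingTerm, h0, mul_comm] using hh.isLittleO

lemma hasLeadingTerm_of_iteratedDeriv_eq_zero {h : ℝ → ℝ} {n : ℕ} (hh : ContDiff ℝ n h)
    (hv : ∀ k < n, iteratedDeriv k h 0 = 0) :
    HasLeadingTerm h (iteratedDeriv n h 0 / n.factorial) n := by
  have htaylor (x : ℝ) :
      taylorWithinEval h n univ 0 x = iteratedDeriv n h 0 / n.factorial * x ^ n := by
    rw [taylor_within_apply, Finset.sum_range_succ, Finset.sum_eq_zero fun k hk => by
      rw [iteratedDerivWithin_univ, hv k (Finset.mem_range.mp hk), smul_zero]]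
    simp [iteratedDerivWithin_univ]
    ring
  simpa [HasLeadingTerm, htaylor] using taylor_isLittleO_univ (x₀ := 0) hh

lemma exists_hasLeadingTerm_succ {h : ℝ → ℝ} (hh : ContDiff ℝ ∞ h) (h0 : h 0 = 0)
    (hne : ∃ n, iteratedDeriv n h 0 ≠ 0) :
    ∃ n c, c ≠ 0 ∧ HasLeadingTerm h c (n + 1) ∧ HasLeadingTerm (deriv h) ((n + 1) * c) n := by
  classical
  obtain ⟨n, hn⟩ : ∃ n, Nat.find hne = n + 1 :=
    Nat.exists_eq_succ_of_ne_zero fun h' => Nat.find_spec hne (by rw [h', iteratedDeriv_zero, h0])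
  have hv : ∀ k < n + 1, iteratedDeriv k h 0 = 0 := fun k hk => by
    simpa using Nat.find_min hne (hn ▸ hk)
  refine ⟨n, iteratedDeriv (n + 1) h 0 / (n + 1).factorial,
    div_ne_zero (hn ▸ Nat.find_spec hne) (by positivity),
    hasLeadingTerm_of_iteratedDeriv_eq_zero (hh.of_le (mod_cast le_top)) hv, ?_⟩
  have hd := hasLeadingTerm_of_iteratedDeriv_eq_zero (n := n)
    ((contDiff_infty_iff_deriv.mp hh).2.of_le (mod_cast le_top)) fun k hk => by
      simpa [← iteratedDeriv_succ'] using hv (k + 1) (by omega)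
  rw [← iteratedDeriv_succ'] at hd
  convert hd using 1
  push_cast [Nat.factorial_succ]
  field_simp

lemma iteratedDeriv_sub_ne_zero {f g : ℝ → ℝ} {n : ℕ} (hf : ContDiff ℝ ∞ f)
    (hg : ContDiff ℝ ∞ g) (hne : iteratedDeriv n f 0 ≠ iteratedDeriv n g 0) :
    iteratedDeriv n (fun x => f x - g x) 0 ≠ 0 := by
  rwa [iteratedDeriv_fun_sub (hf.of_le (mod_cast le_top)).contDiffAt
    (hg.of_le (mod_cast le_top)).contDiffAt, sub_ne_zero]

lemma IsDiffeo.deriv_ne_zero_s8 {f : ℝ → ℝ} (hf : IsDiffeo f) (x : ℝ) : deriv f x ≠ 0 := by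
  intro h0
  have hcomp := ((hf.2.2.differentiable (by simp)) (f x)).hasDerivAt.comp x
    ((hf.2.1.differentiable (by simp)) x).hasDerivAt
  rw [(Function.leftInverse_invFun hf.1.1).comp_eq_id, h0, mul_zero] at hcomp
  exact one_ne_zero ((hasDerivAt_id x).unique hcomp)

lemma deriv_eq_deriv_of_comp_self_eq {f g : ℝ → ℝ} (hf : DifferentiableAt ℝ f 0)
    (hg : DifferentiableAt ℝ g 0) (hf0 : f 0 = 0) (hg0 : g 0 = 0) (hsq : f ∘ f = g ∘ g)
    (hf' : deriv f 0 < 0) (hg' : deriv g 0 ≤ 0) : deriv f 0 = deriv g 0 := by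
  have hff := HasDerivAt.comp_of_eq 0 hf.hasDerivAt hf.hasDerivAt hf0.symm
  have hgg := HasDerivAt.comp_of_eq 0 hg.hasDerivAt hg.hasDerivAt hg0.symm
  rw [hsq] at hff
  nlinarith [hff.unique hgg]

lemma pow_eq_neg_of_comp_self_eq {f g : ℝ → ℝ} {e : ℝ} {N : ℕ} (hf : Differentiable ℝ f)
    (hg : ContDiff ℝ 1 g) (hf0 : f 0 = 0) (hg0 : g 0 = 0) (hfg : deriv f 0 = deriv g 0)
    (hsq : f ∘ f = g ∘ g) (hψ : HasLeadingTerm (fun x => f x - g x) e N) (he : e ≠ 0) :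
    deriv f 0 ^ N = -deriv f 0 := by
  have hgd : Differentiable ℝ g := hg.differentiable one_ne_zero
  have hfb := (hf 0).hasDerivAt.hasLeadingTerm_one hf0
  have hgb := hfg ▸ (hgd 0).hasDerivAt.hasLeadingTerm_one hg0
  have hg' := hfg ▸ (hg.continuous_deriv le_rfl).continuousAt.hasLeadingTerm_zero
  have hsum : HasLeadingTerm 0 (e * deriv f 0 ^ N + deriv f 0 * deriv f 0 ^ 0 * e) N := by
    refine ((hψ.comp hfb).add (by simpa using hg'.comp_sub_comp hgd hfb hgb hψ)).congr
      fun x => ?_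
    simp [show f (f x) = g (g x) from congrFun hsq x]
  have hcoeff := hsum.unique HasLeadingTerm.zero
  have : e * (deriv f 0 ^ N + deriv f 0) = 0 := by linear_combination hcoeff
  linarith [(mul_eq_zero.mp this).resolve_left he]

lemma eq_neg_one_of_pow_succ_eq_neg {b : ℝ} {n : ℕ} (hb : b < 0) (h : b ^ (n + 1) = -b) :
    b = -1 ∧ Even (n + 1) := by
  have heven : Even (n + 1) := by
    by_contra hodd
    linarith [(Nat.not_even_iff_odd.mp hodd).pow_neg hb]
  have hn : n ≠ 0 := by rintro rfl; simp at heven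
  have hpow : (-b) ^ n = 1 := by
    have := heven.neg_pow b
    rw [h, pow_succ] at this
    exact (mul_eq_right₀ (by linarith)).mp this
  exact ⟨by linarith [(pow_eq_one_iff_of_nonneg (by linarith) hn).mp hpow], heven⟩

lemma succ_eq_mul_neg_one_pow_of_comp_self_eq {f g : ℝ → ℝ} {e c : ℝ} {n m : ℕ}
    (hf : Differentiable ℝ f) (hg : Differentiable ℝ g) (hf0 : f 0 = 0) (hg0 : g 0 = 0)
    (hf' : deriv f 0 = -1) (hg' : deriv g 0 = -1) (hsq : f ∘ f = g ∘ g)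
    (hψ : HasLeadingTerm (fun x => f x - g x) e (n + 1))
    (hψ' : HasLeadingTerm (deriv fun x => f x - g x) ((n + 1) * e) n)
    (hG : HasLeadingTerm (fun x => f (f x) - x) c (m + 1))
    (hG' : HasLeadingTerm (deriv fun x => f (f x) - x) ((m + 1) * c) m)
    (he : e ≠ 0) (hc : c ≠ 0) :
    (n + 1 : ℝ) = (m + 1) * (-1) ^ m := by
  have hfb := hf' ▸ (hf 0).hasDerivAt.hasLeadingTerm_one hf0
  have hgb := hg' ▸ (hg 0).hasDerivAt.hasLeadingTerm_one hg0
  have hid : HasLeadingTerm (fun x => x) 1 1 := by simp [HasLeadingTerm]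
  have hcomm (x : ℝ) : f (f (f x)) - g (f (f x)) - (f x - g x) =
      f (f (f x)) - f x - (f (f (g x)) - g x) := by
    have hsq' : ∀ y, f (f y) = g (g y) := congrFun hsq
    have : g (f (f x)) = f (f (g x)) := by rw [hsq' x, hsq' (g x)]
    rw [this]
    ring
  have hL := hψ'.comp_sub_comp (hf.sub hg) (by simpa using hfb.comp hfb) hid hG
  have hR := hG'.comp_sub_comp ((hf.comp hf).sub differentiable_id) hfb hgb hψ
  rw [show m + (n + 1) = n + (m + 1) by omega] at hR
  have hcoeff := (hL.congr hcomm).unique hR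
  have : ((n + 1 : ℝ) - (m + 1) * (-1) ^ m) * (e * c) = 0 := by linear_combination hcoeff
  exact sub_eq_zero.mp ((mul_eq_zero.mp this).resolve_right (mul_ne_zero he hc))

lemma odd_of_succ_eq_mul_neg_one_pow {n m : ℕ} (h : (n + 1 : ℝ) = (m + 1) * (-1) ^ m) :
    Odd (n + 1) := by
  rcases Nat.even_or_odd m with hm | hm
  · rw [hm.neg_one_pow, mul_one] at h
    exact (show n = m by exact_mod_cast (by linarith : (n : ℝ) = m)) ▸ hm.add_one
  · rw [hm.neg_one_pow] at h
    linarith [(n.cast_nonneg : (0 : ℝ) ≤ n), (m.cast_nonneg : (0 : ℝ) ≤ m)]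

theorem taylor_series_agree_of_square_not_infinitesimally_involutive
    (f g : ℝ → ℝ) (hf : IsDiffeo f) (hg : IsDiffeo g)
    (hfa : StrictAnti f) (hga : StrictAnti g)
    (hf0 : f 0 = 0) (hg0 : g 0 = 0)
    (hsq : f ∘ f = g ∘ g)
    (hni : ∃ n : ℕ, 1 ≤ n ∧ iteratedDeriv n (f ∘ f) 0 ≠ iteratedDeriv n (id : ℝ → ℝ) 0) :
    ∀ n : ℕ, 1 ≤ n → iteratedDeriv n f 0 = iteratedDeriv n g 0 := by
  have hfs : ContDiff ℝ ∞ f := hf.2.1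
  have hgs : ContDiff ℝ ∞ g := hg.2.1
  have hFs : ContDiff ℝ ∞ (f ∘ f) := hfs.comp hfs
  have hfd : Differentiable ℝ f := hfs.differentiable (by simp)
  have hgd : Differentiable ℝ g := hgs.differentiable (by simp)
  have hf' : deriv f 0 < 0 := hfa.antitone.deriv_nonpos.lt_of_ne (hf.deriv_ne_zero_s8 0)
  have hfg := deriv_eq_deriv_of_comp_self_eq (hfd 0) (hgd 0) hf0 hg0 hsq hf'
    hga.antitone.deriv_nonpos
  by_contra hne
  push Not at hne
  obtain ⟨k, -, hk⟩ := hne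
  obtain ⟨n, e, he, hψ, hψ'⟩ := exists_hasLeadingTerm_succ (hfs.sub hgs) (by simp [hf0, hg0])
    ⟨k, iteratedDeriv_sub_ne_zero hfs hgs hk⟩
  obtain ⟨hb, hN⟩ := eq_neg_one_of_pow_succ_eq_neg hf'
    (pow_eq_neg_of_comp_self_eq hfd (hgs.of_le (by simp)) hf0 hg0 hfg hsq hψ he)
  obtain ⟨l, -, hl⟩ := hni
  obtain ⟨m, c, hc, hG, hG'⟩ := exists_hasLeadingTerm_succ (hFs.sub contDiff_id) (by simp [hf0])
    ⟨l, iteratedDeriv_sub_ne_zero hFs contDiff_id hl⟩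
  exact Nat.not_even_iff_odd.mpr (odd_of_succ_eq_mul_neg_one_pow
    (succ_eq_mul_neg_one_pow_of_comp_self_eq hfd hgd hf0 hg0 hb (hfg ▸ hb) hsq hψ hψ' hG hG'
      he hc)) hN
end

section
/- Let S be a formal power series over ℝ with zero constant term and linear coefficient −1 (S = −X + higher order terms). Then the first nonzero term after X in the compositional square S∘S has odd index: that is, if m ≥ 2 is an index such that the coefficient of X^k in S∘S equals the coefficient of X^k in X for all k < m, and the coefficient of X^m in S∘S differs from that of X, then m is odd. -/
/-- Formal composition `A ∘ B` of power series over ℝ (intended for `B` with zero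
constant term, in which case `coeff n (B ^ k) = 0` for `k > n` and the defining
sum is the full substitution of `B` into `A`). -/
noncomputable def PSComp (A B : PowerSeries ℝ) : PowerSeries ℝ :=
  PowerSeries.mk fun n => ∑ k ∈ Finset.range (n + 1),
    PowerSeries.coeff k A * PowerSeries.coeff n (B ^ k)

/-!
`S` commutes with `S ∘ S`, so `S ∘ (S ∘ S)` and `(S ∘ S) ∘ S` have the same coefficient of
`X ^ m`. Write `S ∘ S = X + c X ^ m + O(X ^ (m + 1))` with `c ≠ 0`, and `s_k` for the coefficients
of `S`. Substituting `S ∘ S` into `S` changes `s_m` only by `s₁ c = -c`, while substituting `S`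
into `S ∘ S` gives `s_m + c s₁ ^ m = s_m + c (-1) ^ m`. Hence `c (-1) ^ m = -c`, so `m` is odd.
-/

open PowerSeries

section CommRing

variable {R : Type*} [CommRing R]

theorem coeff_pow_eq_zero_of_lt {f : R⟦X⟧} (hf : constantCoeff f = 0) {n k : ℕ} (h : n < k) :
    coeff n (f ^ k) = 0 :=
  coeff_of_lt_order n ((Nat.cast_lt.2 h).trans_le (le_order_pow_of_constantCoeff_eq_zero k hf))

theorem coeff_pow_self_of_constantCoeff_eq_zero {f : R⟦X⟧} (hf : constantCoeff f = 0)
    (n : ℕ) : coeff n (f ^ n) = coeff 1 f ^ n := by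
  obtain ⟨g, rfl⟩ := X_dvd_iff.2 hf
  rw [mul_pow, coeff_X_pow_mul', if_pos le_rfl, Nat.sub_self, coeff_zero_eq_constantCoeff,
    map_pow, coeff_succ_X_mul, coeff_zero_eq_constantCoeff]

theorem X_pow_dvd_pow_sub_X_pow {f : R⟦X⟧} {m : ℕ} (hm : 1 ≤ m) (hf : X ^ m ∣ f - X)
    (k : ℕ) : (X : R⟦X⟧) ^ (k + (m - 1)) ∣ f ^ k - X ^ k := by
  obtain ⟨q, hq⟩ := hf
  set u : R⟦X⟧ := 1 + X ^ (m - 1) * q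
  have hfX : f = X * u := by
    rw [← sub_add_cancel f X, hq, ← Nat.sub_add_cancel hm]
    ring
  have hu : X ^ (m - 1) ∣ u ^ k - 1 := by
    have h := sub_dvd_pow_sub_pow u 1 k
    rw [one_pow, add_sub_cancel_left] at h
    exact (dvd_mul_right _ q).trans h
  rw [hfX, mul_pow, ← mul_sub_one, pow_add]
  exact mul_dvd_mul_left _ hu

theorem coeff_pow_of_X_pow_dvd_sub_X {f : R⟦X⟧} {m k : ℕ} (hm : 1 ≤ m) (hk : 2 ≤ k)
    (hf : X ^ m ∣ f - X) : coeff m (f ^ k) = coeff m (X ^ k : R⟦X⟧) := by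
  have := X_pow_dvd_iff.1 (X_pow_dvd_pow_sub_X_pow hm hf k) m (by omega)
  rwa [map_sub, sub_eq_zero] at this

end CommRing

theorem coeff_PSComp (A B : ℝ⟦X⟧) (n : ℕ) :
    coeff n (PSComp A B) = ∑ k ∈ Finset.range (n + 1), coeff k A * coeff n (B ^ k) :=
  coeff_mk _ _

theorem PSComp_eq_subst (A : ℝ⟦X⟧) {B : ℝ⟦X⟧} (hB : constantCoeff B = 0) :
    PSComp A B = A.subst B := by
  ext n
  rw [coeff_PSComp, coeff_subst' (HasSubst.of_constantCoeff_zero' hB)]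
  refine (finsum_eq_sum_of_support_subset _ fun k hk => ?_).symm
  by_contra hkn
  have hlt : n < k := by simpa using hkn
  exact hk (by simp only [coeff_pow_eq_zero_of_lt hB hlt, mul_zero])

theorem constantCoeff_PSComp {A : ℝ⟦X⟧} (hA : constantCoeff A = 0) (B : ℝ⟦X⟧) :
    constantCoeff (PSComp A B) = 0 := by
  rw [← coeff_zero_eq_constantCoeff_apply, coeff_PSComp, Finset.sum_range_one,
    coeff_zero_eq_constantCoeff_apply, hA, zero_mul]

theorem PSComp_assoc (A : ℝ⟦X⟧) {B C : ℝ⟦X⟧} (hB : constantCoeff B = 0)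
    (hC : constantCoeff C = 0) : PSComp (PSComp A B) C = PSComp A (PSComp B C) := by
  rw [PSComp_eq_subst _ hB, PSComp_eq_subst _ hC, PSComp_eq_subst _ hC,
    PSComp_eq_subst _ (by rw [← PSComp_eq_subst _ hC, constantCoeff_PSComp hB]),
    subst_comp_subst_apply (HasSubst.of_constantCoeff_zero' hB)
      (HasSubst.of_constantCoeff_zero' hC)]

theorem coeff_PSComp_of_X_pow_dvd_sub_X_right {m : ℕ} (hm : 2 ≤ m) {B : ℝ⟦X⟧}
    (hB : X ^ m ∣ B - X) (A : ℝ⟦X⟧) :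
    coeff m (PSComp A B) = coeff m A + coeff 1 A * coeff m B := by
  have hpow : ∀ k, k ≠ 1 → coeff m (B ^ k) = coeff m (X ^ k : ℝ⟦X⟧) := fun k hk1 => by
    rcases Nat.lt_or_ge k 2 with hk | hk
    · obtain rfl : k = 0 := by omega
      simp
    · exact coeff_pow_of_X_pow_dvd_sub_X (by omega) hk hB
  rw [coeff_PSComp, Finset.sum_eq_add 1 m (by omega) (fun k _ ⟨hk1, hkm⟩ => ?_)
    (fun h => absurd (Finset.mem_range.2 (by omega)) h)
    (fun h => absurd (Finset.mem_range.2 (by omega)) h)]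
  · rw [pow_one, hpow m (by omega), coeff_X_pow_self, mul_one, add_comm]
  · rw [hpow k hk1, coeff_X_pow, if_neg (Ne.symm hkm), mul_zero]

theorem coeff_PSComp_of_X_pow_dvd_sub_X_left {m : ℕ} (hm : 2 ≤ m) {B : ℝ⟦X⟧}
    (hB : X ^ m ∣ B - X) {S : ℝ⟦X⟧} (hS : constantCoeff S = 0) :
    coeff m (PSComp B S) = coeff m S + coeff m B * coeff 1 S ^ m := by
  have hcoeff : ∀ k < m, coeff k B = coeff k (X : ℝ⟦X⟧) := fun k hk => by
    have := X_pow_dvd_iff.1 hB k hk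
    rwa [map_sub, sub_eq_zero] at this
  rw [coeff_PSComp, Finset.sum_eq_add 1 m (by omega) (fun k hk ⟨hk1, hkm⟩ => ?_)
    (fun h => absurd (Finset.mem_range.2 (by omega)) h)
    (fun h => absurd (Finset.mem_range.2 (by omega)) h)]
  · rw [hcoeff 1 (by omega), coeff_one_X, one_mul, pow_one,
      coeff_pow_self_of_constantCoeff_eq_zero hS]
  · have hk : k < m := by simp at hk; omega
    rw [hcoeff k hk, coeff_X, if_neg hk1, zero_mul]

theorem first_nonidentity_term_of_square_has_odd_index
    (S : PowerSeries ℝ)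
    (h0 : PowerSeries.constantCoeff S = 0)
    (h1 : PowerSeries.coeff 1 S = -1)
    (m : ℕ) (hm : 2 ≤ m)
    (hagree : ∀ k < m, PowerSeries.coeff k (PSComp S S) =
      PowerSeries.coeff k (PowerSeries.X : PowerSeries ℝ))
    (hne : PowerSeries.coeff m (PSComp S S) ≠
      PowerSeries.coeff m (PowerSeries.X : PowerSeries ℝ)) :
    Odd m := by
  set c := coeff m (PSComp S S)
  have hc : c ≠ 0 := by rwa [coeff_X, if_neg (by omega)] at hne
  have hnear : X ^ m ∣ PSComp S S - X :=
    X_pow_dvd_iff.2 fun k hk => by rw [map_sub, hagree k hk, sub_self]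
  have key : c * (-1) ^ m = -c := by
    have := congrArg (coeff m) (PSComp_assoc S h0 h0)
    rw [coeff_PSComp_of_X_pow_dvd_sub_X_left hm hnear h0,
      coeff_PSComp_of_X_pow_dvd_sub_X_right hm hnear, h1] at this
    linarith
  refine (neg_one_pow_eq_neg_one_iff_odd (R := ℝ) (by norm_num)).1 ?_
  exact mul_left_cancel₀ hc (by rw [key, mul_neg_one])
end

section
/- Let μ be a nonzero real number with μ ≠ 1 and μ ≠ −1, and let Q be a formal power series over ℝ with zero constant term such that Q commutes with μX under formal composition, i.e. Q(μX) = μ·Q(X). If the linear coefficient of Q is 1, then Q = X. -/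
/-
Composing with `μX` rescales the `n`-th coefficient by `μ ^ n`, so commuting with `μX` says
`μ ^ n a_n = μ a_n`; for `n ≥ 2` and `μ ∉ {0, 1, -1}` we have `μ ^ n ≠ μ`, hence `a_n = 0`.
-/

open PowerSeries

theorem PSComp_smul_X (A : PowerSeries ℝ) (c : ℝ) : PSComp A (c • X) = rescale c A := by
  ext n
  rw [PSComp, coeff_mk, coeff_rescale, Finset.sum_eq_single_of_mem n (Finset.self_mem_range_succ n)]
  · rw [smul_pow, coeff_smul, coeff_X_pow_self, smul_eq_mul, mul_one, mul_comm]
  · intro k _ hkn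
    rw [smul_pow, coeff_smul, coeff_X_pow, if_neg hkn.symm, smul_zero, mul_zero]

theorem pow_ne_self_of_two_le {R : Type*} [Ring R] [LinearOrder R] [IsStrictOrderedRing R]
    {a : R} (h0 : a ≠ 0) (h1 : a ≠ 1) (hn1 : a ≠ -1) {n : ℕ} (hn : 2 ≤ n) : a ^ n ≠ a := by
  obtain ⟨m, rfl⟩ := Nat.exists_eq_add_of_le' hn
  intro h
  have hpow : a ^ (m + 1) = 1 := by
    apply mul_left_cancel₀ h0
    rw [← pow_succ', h, mul_one]
  rcases (pow_eq_one_iff_of_ne_zero m.succ_ne_zero).mp hpow with ha | ⟨ha, -⟩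
  exacts [h1 ha, hn1 ha]

theorem coeff_eq_zero_of_rescale_eq_smul {μ : ℝ} {Q : PowerSeries ℝ}
    (h : rescale μ Q = μ • Q) {n : ℕ} (hn : μ ^ n ≠ μ) : coeff n Q = 0 := by
  have hcoeff := congrArg (coeff n) h
  rw [coeff_rescale, coeff_smul, smul_eq_mul, ← sub_eq_zero, ← sub_mul] at hcoeff
  exact (mul_eq_zero.mp hcoeff).resolve_left (sub_ne_zero.mpr hn)

theorem commutes_with_dilation_implies_identity
    (μ : ℝ) (hμ0 : μ ≠ 0) (hμ1 : μ ≠ 1) (hμn1 : μ ≠ -1)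
    (Q : PowerSeries ℝ)
    (hQ0 : PowerSeries.constantCoeff Q = 0)
    (hcomm : PSComp Q (μ • (PowerSeries.X : PowerSeries ℝ)) = μ • Q)
    (hQ1 : PowerSeries.coeff 1 Q = 1) :
    Q = (PowerSeries.X : PowerSeries ℝ) := by
  rw [PSComp_smul_X] at hcomm
  ext n
  rcases n with _ | _ | n
  · simpa using hQ0
  · simpa using hQ1
  · rw [coeff_X, if_neg (by omega)]
    exact coeff_eq_zero_of_rescale_eq_smul hcomm (pow_ne_self_of_two_le hμ0 hμ1 hμn1 (by omega))
end

section
/- (Kopell) Let f and g be orientation-preserving C^∞ diffeomorphisms of ℝ, both fixing 0, which commute: f∘g = g∘f. Suppose T_0 f = X, i.e. f'(0) = 1 and all higher derivatives of f vanish at 0, and suppose 0 is not an interior point of fix(f). Then T_0 g = X as well: g'(0) = 1 and all higher derivatives of g vanish at 0. -/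
open Filter Topology Set Asymptotics Function
open scoped Nat

theorem isLittleO_sub_monomial_of_iteratedDeriv_eq_zero {F : ℝ → ℝ} {n : ℕ}
    (hF : ContDiff ℝ n F) (h : ∀ i < n, iteratedDeriv i F 0 = 0) :
    (fun x => F x - iteratedDeriv n F 0 / n ! * x ^ n) =o[𝓝 0] (· ^ n) := by
  have hT := taylor_isLittleO_univ (x₀ := 0) hF
  have hlow (x : ℝ) : ∑ i ∈ Finset.range n, (i ! : ℝ)⁻¹ * x ^ i * iteratedDeriv i F 0 = 0 :=
    Finset.sum_eq_zero fun i hi => by simp [h i (Finset.mem_range.1 hi)]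
  simp only [taylor_within_apply, iteratedDerivWithin_univ, sub_zero, Finset.sum_range_succ, hlow,
    zero_add, smul_eq_mul] at hT
  exact hT.congr_left fun x => by ring

/-- `T₀ h = X`, including `h 0 = 0`. -/
def IsInfinitelyTangentToId (h : ℝ → ℝ) : Prop :=
  ∀ n, iteratedDeriv n (fun x => h x - x) 0 = 0

theorem isInfinitelyTangentToId_iff {h : ℝ → ℝ} (hh : ContDiff ℝ (⊤ : ℕ∞) h) :
    IsInfinitelyTangentToId h ↔
      h 0 = 0 ∧ deriv h 0 = 1 ∧ ∀ n, 2 ≤ n → iteratedDeriv n h 0 = 0 := by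
  have key (n : ℕ) : iteratedDeriv n (fun x => h x - x) 0 =
      iteratedDeriv n h 0 - if n = 1 then 1 else 0 := by
    rw [iteratedDeriv_fun_sub (g := fun x => x) (hh.of_le (by exact_mod_cast le_top)).contDiffAt
      contDiff_id.contDiffAt, iteratedDeriv_fun_id_zero]
  simp only [IsInfinitelyTangentToId, key]
  constructor
  · intro H
    exact ⟨by simpa using H 0, sub_eq_zero.1 (by simpa using H 1),
      fun n hn => by simpa [show n ≠ 1 by omega] using H n⟩
  · rintro ⟨h0, h1, h2⟩ (_ | _ | n)
    · simp [h0]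
    · simp [h1]
    · simp [h2 (n + 2) (by omega)]

theorem IsInfinitelyTangentToId.isLittleO {h : ℝ → ℝ} (hh : ContDiff ℝ (⊤ : ℕ∞) h)
    (ht : IsInfinitelyTangentToId h) (k : ℕ) : (fun x => h x - x) =o[𝓝 0] (· ^ k) := by
  simpa [ht k] using isLittleO_sub_monomial_of_iteratedDeriv_eq_zero (n := k)
    ((hh.sub contDiff_id).of_le (by exact_mod_cast le_top)) fun i _ => ht i

theorem exists_isLittleO_sub_id_sub_monomial {h : ℝ → ℝ} (hh : ContDiff ℝ (⊤ : ℕ∞) h)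
    (ht : ¬IsInfinitelyTangentToId h) :
    ∃ (k : ℕ) (c : ℝ), c ≠ 0 ∧ (fun x => h x - x - c * x ^ k) =o[𝓝 0] (· ^ k) := by
  classical
  have hex : ∃ n, iteratedDeriv n (fun x => h x - x) 0 ≠ 0 := by
    simpa [IsInfinitelyTangentToId] using ht
  exact ⟨Nat.find hex, _,
    div_ne_zero (Nat.find_spec hex) (Nat.cast_ne_zero.2 (Nat.factorial_ne_zero _)),
    isLittleO_sub_monomial_of_iteratedDeriv_eq_zero
      ((hh.sub contDiff_id).of_le (by exact_mod_cast le_top))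
      fun i hi => not_not.1 (Nat.find_min hex hi)⟩

def conjNeg (h : ℝ → ℝ) : ℝ → ℝ := fun x => -h (-x)

@[simp]
theorem conjNeg_apply (h : ℝ → ℝ) (x : ℝ) : conjNeg h x = -h (-x) := rfl

theorem isInfinitelyTangentToId_conjNeg_iff {h : ℝ → ℝ} :
    IsInfinitelyTangentToId (conjNeg h) ↔ IsInfinitelyTangentToId h := by
  have hsub : (fun x => conjNeg h x - x) = fun x => -(fun y => h y - y) (-x) := by
    funext x
    simp only [conjNeg_apply]
    ring
  refine forall_congr' fun n => ?_
  rw [hsub, iteratedDeriv_fun_neg, iteratedDeriv_comp_neg (f := fun y => h y - y)]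
  simp

theorem isDiffeo_conjNeg {h : ℝ → ℝ} (hh : IsDiffeo h) : IsDiffeo (conjNeg h) := by
  obtain ⟨hbij, hC, hinvC⟩ := hh
  have hbij' : Bijective (conjNeg h) := neg_bijective.comp (hbij.comp neg_bijective)
  have hinv : invFun (conjNeg h) = conjNeg (invFun h) :=
    invFun_eq_of_injective_of_rightInverse hbij'.1 fun x => by
      simp [rightInverse_invFun hbij.2 (-x)]
  refine ⟨hbij', (hC.comp contDiff_neg).neg, ?_⟩
  rw [hinv]
  exact (hinvC.comp contDiff_neg).neg

theorem strictMono_conjNeg {h : ℝ → ℝ} (hh : StrictMono h) : StrictMono (conjNeg h) :=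
  fun _ _ hxy => neg_lt_neg (hh (neg_lt_neg hxy))

theorem commute_conjNeg {f g : ℝ → ℝ} (hfg : Function.Commute f g) :
    Function.Commute (conjNeg f) (conjNeg g) := fun x => by simp [hfg (-x)]

theorem frequently_nhdsGT_or_nhdsLT_notMem {α : Type*} [TopologicalSpace α] [LinearOrder α]
    [OrderTopology α] {s : Set α} {a : α} (ha : a ∈ s) (hs : a ∉ interior s) :
    (∃ᶠ x in 𝓝[>] a, x ∉ s) ∨ ∃ᶠ x in 𝓝[<] a, x ∉ s := by
  contrapose! hs
  rw [mem_interior_iff_mem_nhds, ← nhdsNE_sup_pure, ← nhdsLT_sup_nhdsGT]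
  exact ⟨⟨hs.2, hs.1⟩, ha⟩

theorem frequently_conjNeg_ne {f : ℝ → ℝ} (hf : ∃ᶠ x in 𝓝[<] 0, f x ≠ x) :
    ∃ᶠ x in 𝓝[>] 0, conjNeg f x ≠ x := by
  simpa using (tendsto_neg_nhdsLT (a := (0 : ℝ))).frequently
    (hf.mono fun x hx => by simpa [neg_eq_iff_eq_neg] using hx)

theorem hasDerivAt_iterate {𝕜 : Type*} [NontriviallyNormedField 𝕜] {G : 𝕜 → 𝕜}
    (hG : Differentiable 𝕜 G) (n : ℕ) (x : 𝕜) :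
    HasDerivAt G^[n] (∏ i ∈ Finset.range n, deriv G (G^[i] x)) x := by
  induction n with
  | zero => simpa using hasDerivAt_id x
  | succ n ih =>
    rw [iterate_succ', Finset.prod_range_succ, mul_comm]
    exact (hG _).hasDerivAt.comp x ih

theorem Monotone.iterate_mem_Icc {G : ℝ → ℝ} (hmono : Monotone G) {b w : ℝ} {m : ℕ}
    (hw : w ∈ Icc (G^[m] b) b) (i : ℕ) : G^[i] w ∈ Icc (G^[i + m] b) (G^[i] b) := by
  rw [iterate_add_apply]
  exact ⟨hmono.iterate i hw.1, hmono.iterate i hw.2⟩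

/-- `Gⁱ [G² b, b] ⊆ [Gⁱ⁺² b, Gⁱ b]`, and these intervals cover each point at most twice. -/
theorem sum_abs_iterate_sub_le {G : ℝ → ℝ} (hmono : Monotone G) {b : ℝ} (hb : 0 ≤ b)
    (hmaps : MapsTo G (Icc 0 b) (Icc 0 b)) {u v : ℝ} (hu : u ∈ Icc (G^[2] b) b)
    (hv : v ∈ Icc (G^[2] b) b) (n : ℕ) :
    ∑ i ∈ Finset.range n, |G^[i] u - G^[i] v| ≤ 2 * b := by
  have hb' (i : ℕ) : G^[i] b ∈ Icc 0 b := hmaps.iterate i ⟨hb, le_rfl⟩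
  have htel (i : ℕ) : G^[i] b - G^[i + 2] b =
      (G^[i] b - G^[i + 1] b) + (G^[i + 1] b - G^[i + 1 + 1] b) := by ring
  calc ∑ i ∈ Finset.range n, |G^[i] u - G^[i] v|
      ≤ ∑ i ∈ Finset.range n, (G^[i] b - G^[i + 2] b) :=
        Finset.sum_le_sum fun i _ => abs_sub_le_iff.2
          ⟨by linarith [(hmono.iterate_mem_Icc hu i).2, (hmono.iterate_mem_Icc hv i).1],
            by linarith [(hmono.iterate_mem_Icc hu i).1, (hmono.iterate_mem_Icc hv i).2]⟩
    _ = (b - G^[n] b) + (G b - G^[n + 1] b) := by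
        simp only [htel, Finset.sum_add_distrib, Finset.sum_range_sub' (fun i => G^[i] b),
          Finset.sum_range_sub' (fun i => G^[i + 1] b)]
        simp
    _ ≤ 2 * b := by linarith [(hb' n).1, (hb' (n + 1)).1, (hmaps ⟨hb, le_rfl⟩).2]

theorem exists_deriv_iterate_le_mul {G : ℝ → ℝ} (hG : ContDiff ℝ 2 G) (hG' : ∀ x, 0 < deriv G x)
    {b : ℝ} (hb : 0 ≤ b) (hmaps : MapsTo G (Icc 0 b) (Icc 0 b)) :
    ∃ C, ∀ n, ∀ u ∈ Icc (G^[2] b) b, ∀ v ∈ Icc (G^[2] b) b,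
      deriv G^[n] u ≤ C * deriv G^[n] v := by
  have hmono : Monotone G := (strictMono_of_deriv_pos hG').monotone
  have horbit (i : ℕ) {w : ℝ} (hw : w ∈ Icc (G^[2] b) b) : G^[i] w ∈ Icc 0 b :=
    hmaps.iterate i ⟨(hmaps.iterate 2 ⟨hb, le_rfl⟩).1.trans hw.1, hw.2⟩
  obtain ⟨K, hK⟩ : ∃ K, LipschitzOnWith K (fun x => Real.log (deriv G x)) (Icc 0 b) :=
    (hG.deriv' (n := 1)).log (fun x => (hG' x).ne') |>.contDiffOn.exists_lipschitzOnWith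
      one_ne_zero (convex_Icc 0 b) isCompact_Icc
  refine ⟨Real.exp (K * (2 * b)), fun n u hu v hv => ?_⟩
  have hlip (i : ℕ) : Real.log (deriv G (G^[i] u)) - Real.log (deriv G (G^[i] v)) ≤
      K * |G^[i] u - G^[i] v| :=
    (le_abs_self _).trans (by
      simpa [Real.dist_eq] using hK.dist_le_mul _ (horbit i hu) _ (horbit i hv))
  have hexp (w : ℝ) :
      deriv G^[n] w = Real.exp (∑ i ∈ Finset.range n, Real.log (deriv G (G^[i] w))) := by
    rw [(hasDerivAt_iterate (hG.differentiable (by norm_num)) n w).deriv, Real.exp_sum]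
    exact Finset.prod_congr rfl fun i _ => (Real.exp_log (hG' _)).symm
  rw [hexp, hexp, ← Real.exp_add, Real.exp_le_exp]
  have := Finset.sum_le_sum fun i (_ : i ∈ Finset.range n) => hlip i
  rw [Finset.sum_sub_distrib, ← Finset.mul_sum] at this
  linarith [mul_le_mul_of_nonneg_left (sum_abs_iterate_sub_le hmono hb hmaps hu hv n)
    K.coe_nonneg]

theorem exists_mem_uIcc_deriv_eq_slope {F : ℝ → ℝ} (hF : Differentiable ℝ F) {u v : ℝ}
    (huv : u ≠ v) : ∃ ξ ∈ uIcc u v, deriv F ξ = slope F u v := by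
  rcases huv.lt_or_gt with h | h
  · obtain ⟨ξ, hξ, hξF⟩ := exists_deriv_eq_slope' F h hF.continuous.continuousOn
      fun x _ => (hF x).differentiableWithinAt
    exact ⟨ξ, Icc_subset_uIcc (Ioo_subset_Icc_self hξ), hξF⟩
  · obtain ⟨ξ, hξ, hξF⟩ := exists_deriv_eq_slope' F h hF.continuous.continuousOn
      fun x _ => (hF x).differentiableWithinAt
    exact ⟨ξ, Icc_subset_uIcc' (Ioo_subset_Icc_self hξ), hξF.trans (slope_comm _ _ _)⟩

theorem exists_slope_iterate_le_mul {G : ℝ → ℝ} (hG : ContDiff ℝ 2 G) (hG' : ∀ x, 0 < deriv G x)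
    {b : ℝ} (hb : 0 ≤ b) (hmaps : MapsTo G (Icc 0 b) (Icc 0 b)) :
    ∃ C, ∀ n, ∀ u ∈ Icc (G^[2] b) b, ∀ v ∈ Icc (G^[2] b) b, ∀ u' ∈ Icc (G^[2] b) b,
      ∀ v' ∈ Icc (G^[2] b) b, u ≠ v → u' ≠ v' → slope G^[n] u v ≤ C * slope G^[n] u' v' := by
  obtain ⟨C, hC⟩ := exists_deriv_iterate_le_mul hG hG' hb hmaps
  refine ⟨C, fun n u hu v hv u' hu' v' hv' huv huv' => ?_⟩
  have hd := (hG.differentiable (by norm_num)).iterate n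
  obtain ⟨ξ, hξ, hξs⟩ := exists_mem_uIcc_deriv_eq_slope hd huv
  obtain ⟨η, hη, hηs⟩ := exists_mem_uIcc_deriv_eq_slope hd huv'
  rw [← hξs, ← hηs]
  exact hC n ξ (uIcc_subset_Icc hu hv hξ) η (uIcc_subset_Icc hu' hv' hη)

theorem tendsto_iterate_nhdsGT_zero {G : ℝ → ℝ} (hG : Continuous G) {δ : ℝ}
    (hGδ : ∀ x ∈ Ioc 0 δ, G x ∈ Ioo 0 x) {x : ℝ} (hx : x ∈ Ioc 0 δ) :
    Tendsto (fun n => G^[n] x) atTop (𝓝[>] 0) := by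
  have hmaps : MapsTo G (Ioc 0 δ) (Ioc 0 δ) := fun y hy =>
    ⟨(hGδ y hy).1, (hGδ y hy).2.le.trans hy.2⟩
  have horb (n : ℕ) : G^[n] x ∈ Ioc 0 δ := hmaps.iterate n hx
  have hanti : Antitone fun n => G^[n] x := antitone_nat_of_succ_le fun n => by
    rw [iterate_succ_apply']
    exact (hGδ _ (horb n)).2.le
  have hbdd : BddBelow (range fun n => G^[n] x) := ⟨0, forall_mem_range.2 fun n => (horb n).1.le⟩
  have hlim := tendsto_atTop_ciInf hanti hbdd
  have hl : ⨅ n, G^[n] x = 0 := by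
    by_contra hne
    have hl0 : 0 < ⨅ n, G^[n] x := (le_ciInf fun n => (horb n).1.le).lt_of_ne' hne
    exact (hGδ _ ⟨hl0, (ciInf_le hbdd 0).trans (horb 0).2⟩).2.ne
      (isFixedPt_of_tendsto_iterate hlim hG.continuousAt)
  rw [hl] at hlim
  exact tendsto_nhdsWithin_iff.2 ⟨hlim, Eventually.of_forall fun n => (horb n).1⟩

theorem exists_iterate_sub_iterate_succ_le_mul_abs {f G : ℝ → ℝ} (hG : ContDiff ℝ 2 G)
    (hG' : ∀ x, 0 < deriv G x) (hG0 : G 0 = 0) (hcomm : Function.Commute f G) {x₀ : ℝ}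
    (hx₀ : 0 < x₀) (hGx₀ : G x₀ < x₀) (hfx₀ : f x₀ ≠ x₀) (hGf : G x₀ ≤ f x₀)
    (hfG : f (G x₀) ≤ x₀) :
    ∃ K, ∀ n, G^[n] x₀ - G^[n + 1] x₀ ≤ K * |f (G^[n] x₀) - G^[n] x₀| := by
  have hGm := strictMono_of_deriv_pos hG'
  set y₀ := f x₀
  -- `G x₀`, `x₀` and `y₀` all lie in `[G² b, b]`, where the iterates of `G` have bounded distortion
  set b := max x₀ y₀
  have hGb : G b ≤ x₀ := by
    rw [hGm.monotone.map_max, ← hcomm x₀]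
    exact max_le hGx₀.le hfG
  have hI {z : ℝ} (hz₁ : G x₀ ≤ z) (hz₂ : z ≤ b) : z ∈ Icc (G^[2] b) b :=
    ⟨(hGm.monotone hGb).trans hz₁, hz₂⟩
  obtain ⟨C, hC⟩ := exists_slope_iterate_le_mul hG hG' (hx₀.le.trans (le_max_left _ _))
    fun x hx => ⟨hG0 ▸ hGm.monotone hx.1, (hGm.monotone hx.2).trans (hGb.trans (le_max_left _ _))⟩
  refine ⟨(x₀ - G x₀) * C / |y₀ - x₀|, fun n => ?_⟩
  have hs : 0 ≤ slope G^[n] x₀ y₀ :=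
    ((hGm.iterate n).monotone.monotoneOn univ).slope_nonneg trivial trivial
  have hyx : |y₀ - x₀| ≠ 0 := abs_ne_zero.2 (sub_ne_zero.2 hfx₀)
  have hdisp : |f (G^[n] x₀) - G^[n] x₀| = |y₀ - x₀| * slope G^[n] x₀ y₀ := by
    have := sub_smul_slope G^[n] x₀ y₀
    rw [smul_eq_mul, vsub_eq_sub] at this
    rw [hcomm.iterate_right n x₀, ← this, abs_mul, abs_of_nonneg hs]
  calc G^[n] x₀ - G^[n + 1] x₀ = (x₀ - G x₀) * slope G^[n] (G x₀) x₀ := by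
        rw [← smul_eq_mul, sub_smul_slope, vsub_eq_sub, iterate_succ_apply]
    _ ≤ (x₀ - G x₀) * (C * slope G^[n] x₀ y₀) :=
        mul_le_mul_of_nonneg_left (hC n _ (hI le_rfl (hGx₀.le.trans (le_max_left _ _))) _
          (hI hGx₀.le (le_max_left _ _)) _ (hI hGx₀.le (le_max_left _ _)) _
          (hI hGf (le_max_right _ _)) hGx₀.ne hfx₀.symm) (sub_nonneg.2 hGx₀.le)
    _ = (x₀ - G x₀) * C / |y₀ - x₀| * |f (G^[n] x₀) - G^[n] x₀| := by
        rw [hdisp]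
        field_simp

theorem eventually_eq_of_commute_of_mul_pow_le_sub {f G : ℝ → ℝ} {k : ℕ} {c : ℝ}
    (hG : ContDiff ℝ 2 G) (hG' : ∀ x, 0 < deriv G x) (hG0 : G 0 = 0) (hc : 0 < c)
    (hGc : ∀ᶠ x in 𝓝[>] 0, c * x ^ k ≤ x - G x) (hcomm : Function.Commute f G)
    (hf : (fun x => f x - x) =o[𝓝[>] 0] (· ^ k)) : ∀ᶠ x in 𝓝[>] 0, f x = x := by
  by_contra hne
  obtain ⟨δ, hδ, hδs⟩ := mem_nhdsGT_iff_exists_Ioc_subset.1 (hGc.and (hf.bound hc))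
  have hδ' : ∀ x ∈ Ioc 0 δ, c * x ^ k ≤ x - G x ∧ |f x - x| ≤ c * x ^ k := fun x hx => by
    simpa [abs_of_pos hx.1] using hδs hx
  have hGδ : ∀ x ∈ Ioc 0 δ, G x ∈ Ioo 0 x := fun x hx =>
    ⟨hG0 ▸ strictMono_of_deriv_pos hG' hx.1,
      by linarith [(hδ' x hx).1, mul_pos hc (pow_pos hx.1 k)]⟩
  have hmaps : MapsTo G (Ioc 0 δ) (Ioc 0 δ) := fun x hx =>
    ⟨(hGδ x hx).1, (hGδ x hx).2.le.trans hx.2⟩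
  obtain ⟨x₀, hfx₀, hx₀⟩ := ((not_eventually.1 hne).and_eventually (Ioc_mem_nhdsGT hδ)).exists
  have hGx₀ := hGδ x₀ hx₀
  have hGf : G x₀ ≤ f x₀ := by linarith [abs_le.1 (hδ' x₀ hx₀).2, (hδ' x₀ hx₀).1]
  have hfG : f (G x₀) ≤ x₀ := by
    have := mul_le_mul_of_nonneg_left (pow_le_pow_left₀ hGx₀.1.le hGx₀.2.le k) hc.le
    linarith [(abs_le.1 (hδ' _ (hmaps hx₀)).2).2, (hδ' x₀ hx₀).1]
  obtain ⟨K, hK⟩ := exists_iterate_sub_iterate_succ_le_mul_abs hG hG' hG0 hcomm hx₀.1 hGx₀.2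
    hfx₀ hGf hfG
  have hbound (n : ℕ) : ‖(G^[n] x₀) ^ k‖ ≤ K / c * ‖f (G^[n] x₀) - G^[n] x₀‖ := by
    have hu := hmaps.iterate n hx₀
    have hstep := hK n
    rw [iterate_succ_apply'] at hstep
    rw [Real.norm_eq_abs, Real.norm_eq_abs, abs_of_pos (pow_pos hu.1 k), div_mul_eq_mul_div,
      le_div_iff₀ hc]
    linarith [(hδ' _ hu).1]
  have hpos (n : ℕ) : (G^[n] x₀) ^ k ≠ 0 := (pow_pos (hmaps.iterate n hx₀).1 k).ne'
  exact isLittleO_irrefl (Frequently.of_forall hpos)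
    ((IsBigO.of_bound (K / c) (Eventually.of_forall hbound)).trans_isLittleO
      (hf.comp_tendsto (tendsto_iterate_nhdsGT_zero hG.continuous hGδ hx₀)))

theorem Monotone.deriv_pos_of_leftInverse {g h : ℝ → ℝ} (hgm : Monotone g) (hinv : LeftInverse h g)
    (hh : Differentiable ℝ h) (hg : Differentiable ℝ g) (x : ℝ) : 0 < deriv g x := by
  have hid := (hh (g x)).hasDerivAt.comp x (hg x).hasDerivAt
  rw [show h ∘ g = id from funext hinv] at hid
  have hone : deriv h (g x) * deriv g x = 1 := hid.unique (hasDerivAt_id x)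
  exact hgm.deriv_nonneg.lt_of_ne fun h0 => by simp [← h0] at hone

theorem eventually_half_mul_pow_le {F : ℝ → ℝ} {k : ℕ} {c : ℝ} (hc : 0 < c)
    (h : (fun x => F x - c * x ^ k) =o[𝓝[>] 0] (· ^ k)) :
    ∀ᶠ x in 𝓝[>] 0, c / 2 * x ^ k ≤ F x := by
  filter_upwards [h.bound (half_pos hc), self_mem_nhdsWithin] with x hx (hx0 : 0 < x)
  rw [Real.norm_eq_abs, Real.norm_eq_abs, abs_of_pos (pow_pos hx0 k)] at hx
  linarith [neg_abs_le (F x - c * x ^ k)]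

theorem exists_eventually_mul_pow_le_sub_of_rightInverse {g G : ℝ → ℝ} {k : ℕ} {c : ℝ}
    (hc : 0 < c) (hg : DifferentiableAt ℝ g 0) (hg0 : g 0 = 0) (hGg : RightInverse G g)
    (hG : Tendsto G (𝓝[>] 0) (𝓝[>] 0)) (hgc : ∀ᶠ y in 𝓝[>] 0, c * y ^ k ≤ g y - y) :
    ∃ c₁ > 0, ∀ᶠ x in 𝓝[>] 0, c₁ * x ^ k ≤ x - G x := by
  obtain ⟨M, hM, hgM⟩ := (hg.isBigO_sub.mono (nhdsWithin_le_nhds (s := Ioi 0))).exists_pos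
  refine ⟨c / M ^ k, by positivity, ?_⟩
  filter_upwards [hG.eventually (hgc.and (hgM.bound.and self_mem_nhdsWithin)),
    self_mem_nhdsWithin] with x ⟨hcx, hMx, hy⟩ (hx : 0 < x)
  simp only [hGg x, hg0, sub_zero, Real.norm_eq_abs, abs_of_pos hx,
    abs_of_pos (show 0 < G x from hy)] at hcx hMx
  have hxy : (x / M) ^ k ≤ G x ^ k :=
    pow_le_pow_left₀ (by positivity) ((div_le_iff₀ hM).2 (by linarith)) k
  calc c / M ^ k * x ^ k = c * (x / M) ^ k := by rw [div_pow]; ring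
    _ ≤ c * G x ^ k := mul_le_mul_of_nonneg_left hxy hc.le
    _ ≤ x - G x := hcx

theorem IsInfinitelyTangentToId.of_commute {f g : ℝ → ℝ} (hf : ContDiff ℝ (⊤ : ℕ∞) f)
    (hft : IsInfinitelyTangentToId f) (hg : IsDiffeo g) (hgm : StrictMono g) (hg0 : g 0 = 0)
    (hcomm : Function.Commute f g) (hmoves : ∃ᶠ x in 𝓝[>] 0, f x ≠ x) :
    IsInfinitelyTangentToId g := by
  obtain ⟨hbij, hgC, hinvC⟩ := hg
  by_contra hgt
  obtain ⟨k, c, hc, hgk⟩ := exists_isLittleO_sub_id_sub_monomial hgC hgt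
  replace hgk := hgk.mono (nhdsWithin_le_nhds (s := Ioi 0))
  have hgd := hgC.differentiable (by simp)
  have hinvd := hinvC.differentiable (by simp)
  have hinv := leftInverse_invFun hbij.1
  have hinv' := rightInverse_invFun hbij.2
  -- `G` is whichever of `g`, `g⁻¹` contracts to order `k` on the right of `0`
  obtain ⟨G, c₁, hG, hG', hG0, hc₁, hGc, hcommG⟩ : ∃ G c₁, ContDiff ℝ 2 G ∧ (∀ x, 0 < deriv G x) ∧
      G 0 = 0 ∧ 0 < c₁ ∧ (∀ᶠ x in 𝓝[>] 0, c₁ * x ^ k ≤ x - G x) ∧ Function.Commute f G := by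
    rcases hc.lt_or_gt with hneg | hpos
    · exact ⟨g, -c / 2, hgC.of_le (WithTop.coe_le_coe.2 le_top),
        hgm.monotone.deriv_pos_of_leftInverse hinv hinvd hgd, hg0, by linarith,
        eventually_half_mul_pow_le (neg_pos.2 hneg) (hgk.neg_left.congr_left fun x => by ring),
        hcomm⟩
    · have hGm : StrictMono (invFun g) := fun x y hxy => hgm.lt_iff_lt.1 (by rwa [hinv' x, hinv' y])
      have hG0 : invFun g 0 = 0 := by simpa [hg0] using hinv 0
      have hGt : Tendsto (invFun g) (𝓝[>] 0) (𝓝[>] 0) := tendsto_nhdsWithin_iff.2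
        ⟨(hinvC.continuous.tendsto' 0 0 hG0).mono_left nhdsWithin_le_nhds,
          eventually_nhdsWithin_of_forall fun x hx => hG0 ▸ hGm hx⟩
      obtain ⟨c₁, hc₁, hGc⟩ := exists_eventually_mul_pow_le_sub_of_rightInverse (half_pos hpos)
        (hgd 0) hg0 hinv' hGt (eventually_half_mul_pow_le hpos (hgk.congr_left fun x => by ring))
      exact ⟨invFun g, c₁, hinvC.of_le (WithTop.coe_le_coe.2 le_top),
        hGm.monotone.deriv_pos_of_leftInverse hinv' hgd hinvd, hG0, hc₁, hGc,
        hcomm.inverses_right hinv' hinv⟩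
  obtain ⟨x, hne, heq⟩ := (hmoves.and_eventually (eventually_eq_of_commute_of_mul_pow_le_sub
    hG hG' hG0 hc₁ hGc hcommG ((hft.isLittleO hf k).mono nhdsWithin_le_nhds))).exists
  exact hne heq

theorem kopell_lemma_general
    (f g : ℝ → ℝ) (hf : IsDiffeo f) (hg : IsDiffeo g)
    (hgm : StrictMono g)
    (hf0 : f 0 = 0) (hg0 : g 0 = 0)
    (hcomm : f ∘ g = g ∘ f)
    (hT1 : deriv f 0 = 1)
    (hThigh : ∀ n : ℕ, 2 ≤ n → iteratedDeriv n f 0 = 0)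
    (hnotint : (0 : ℝ) ∉ interior {x : ℝ | f x = x}) :
    deriv g 0 = 1 ∧ ∀ n : ℕ, 2 ≤ n → iteratedDeriv n g 0 = 0 := by
  have hft := (isInfinitelyTangentToId_iff hf.2.1).2 ⟨hf0, hT1, hThigh⟩
  have hcomm' : Function.Commute f g := congrFun hcomm
  suffices IsInfinitelyTangentToId g from ((isInfinitelyTangentToId_iff hg.2.1).1 this).2
  rcases frequently_nhdsGT_or_nhdsLT_notMem (s := {x | f x = x}) hf0 hnotint with hR | hL
  · exact hft.of_commute hf.2.1 hg hgm hg0 hcomm' hR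
  · rw [← isInfinitelyTangentToId_conjNeg_iff] at hft ⊢
    exact hft.of_commute (isDiffeo_conjNeg hf).2.1 (isDiffeo_conjNeg hg) (strictMono_conjNeg hgm)
      (by simp [hg0]) (commute_conjNeg hcomm') (frequently_conjNeg_ne hL)

theorem kopell_lemma
    (f g : ℝ → ℝ) (hf : IsDiffeo f) (hg : IsDiffeo g)
    (hfm : StrictMono f) (hgm : StrictMono g)
    (hf0 : f 0 = 0) (hg0 : g 0 = 0)
    (hcomm : f ∘ g = g ∘ f)
    (hT1 : deriv f 0 = 1)
    (hThigh : ∀ n : ℕ, 2 ≤ n → iteratedDeriv n f 0 = 0)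
    (hnotint : (0 : ℝ) ∉ interior {x : ℝ | f x = x}) :
    deriv g 0 = 1 ∧ ∀ n : ℕ, 2 ≤ n → iteratedDeriv n g 0 = 0 :=
  kopell_lemma_general f g hf hg hgm hf0 hg0 hcomm hT1 hThigh hnotint
end
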